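/- arXiv:2110.14724 — 2 statements merged into one kernel-verified Lean document; each statement's English description precedes it below -/
import Mathlib

section
/- For a set 𝒢 of finite game forms, the following are equivalent: (i) every state in every finite concurrent reachability game whose local interactions all belong to 𝒢 is maximizable; (ii) every game form in 𝒢 is reach-maximizable. -/
/-!
The value of a concurrent reachability game is the least fixed point `lfpΔ` of the one-step
operator `Δop`, obtained by value iteration.

If every local interaction is reach-maximizable, every state of positive value is secure: among
the non-secure states, those of maximal value `c > 0` contain one where `c` is the least fixed point
of `f_α` for the partial valuation induced by `lfpΔ`, undefined on the Nature states that stay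
among them; reach-maximizability there yields an optimal local strategy that reaches a secure
state with positive probability against every optimal answer. Playing in each secure state such a
progressive local strategy of minimal rank is optimal: a state where the gap between `lfpΔ` and
the value of this positional strategy is maximal, of minimal rank among those, would have a
successor with the same gap and smaller rank.

Conversely, if a game form `F` is not reach-maximizable w.r.t. `α`, with least fixed point `v > 0`,
consider the game `C_{(F,α)}`, whose value at `q₀` is `v`. Player B answers each optimal local
strategy of Player A by an action keeping the play in `q₀`, and every other one by a best
response: either Player A never leaves `q₀`, or her first suboptimal move costs her. So no
strategy of Player A achieves `v`.
-/

open scoped BigOperators Classical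

noncomputable section

/-- A probability distribution on a finite type. -/
def FDist (X : Type) [Fintype X] : Type :=
  { p : X → ℝ // (∀ x, 0 ≤ p x) ∧ ∑ x, p x = 1 }

namespace CRG

variable {A B Q D : Type} [Fintype A] [Fintype B] [Fintype Q] [Fintype D]

/-- The support of a distribution. -/
def supp {X : Type} [Fintype X] (σ : FDist X) : Set X := { x | σ.1 x ≠ 0 }

/-- The Dirac distribution. -/
def dirac {X : Type} [Fintype X] [DecidableEq X] (x : X) : FDist X :=
  ⟨fun y => if y = x then 1 else 0, by
    constructor
    · intro y
      dsimp only
      split <;> norm_num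
    · simp⟩

/-- Outcome of a pair of mixed strategies in the game in normal form with payoff `u`. -/
def out (u : A → B → ℝ) (σA : FDist A) (σB : FDist B) : ℝ :=
  ∑ a, ∑ b, σA.1 a * σB.1 b * u a b

/-- Outcome of a mixed strategy of Player A against a pure action of Player B. -/
def outB (u : A → B → ℝ) (σA : FDist A) (b : B) : ℝ :=
  ∑ a, σA.1 a * u a b

/-- The value of a Player A mixed strategy in a game in normal form. -/
def valStratGF (u : A → B → ℝ) (σA : FDist A) : ℝ :=
  ⨅ σB : FDist B, out u σA σB

/-- The (von Neumann) value of a finite game in normal form. -/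
def valGF (u : A → B → ℝ) : ℝ :=
  ⨆ σA : FDist A, valStratGF u σA

/-- The optimal Player A mixed strategies in a game in normal form. -/
def OptA (u : A → B → ℝ) : Set (FDist A) := { σA | valStratGF u σA = valGF u }

/-- The optimal actions of Player B against the Player A mixed strategy `σA`. -/
def optActs (u : A → B → ℝ) (σA : FDist A) : Set B :=
  { b | outB u σA b = valStratGF u σA }

/-- μ_v : the lift of a valuation of the states to the Nature states. -/
def lift (dist : D → FDist Q) (v : Q → ℝ) (d : D) : ℝ := ∑ q, (dist d).1 q * v q

/-- The payoff function of the local interaction `F_q` valued by `μ_m`. -/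
def locPay (δ : Q → A → B → D) (dist : D → FDist Q) (m : Q → ℝ) (q : Q) : A → B → ℝ :=
  fun a b => lift dist m (δ q a b)

/-- One-step transition probability between states. -/
def step (δ : Q → A → B → D) (dist : D → FDist Q) (σA : FDist A) (σB : FDist B)
    (q q' : Q) : ℝ :=
  ∑ a, ∑ b, σA.1 a * σB.1 b * (dist (δ q a b)).1 q'

/-- The operator Δ on valuations of the states. -/
def Δop (δ : Q → A → B → D) (dist : D → FDist Q) (T : Q) (v : Q → ℝ) : Q → ℝ :=
  fun q => if q = T then 1 else valGF (fun a b => lift dist v (δ q a b))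

/-- The target `T` is an absorbing (self-looping) sink. -/
def Absorbing (δ : Q → A → B → D) (dist : D → FDist Q) (T : Q) : Prop :=
  ∀ a b, (dist (δ T a b)).1 = fun q => if q = T then 1 else 0

/-- `m` is the least fixed point of Δ on `[0,1]^Q`. -/
def IsLfpDelta (δ : Q → A → B → D) (dist : D → FDist Q) (T : Q) (m : Q → ℝ) : Prop :=
  (∀ q, m q ∈ Set.Icc (0:ℝ) 1) ∧ Δop δ dist T m = m ∧
    ∀ v : Q → ℝ, (∀ q, v q ∈ Set.Icc (0:ℝ) 1) → Δop δ dist T v = v → ∀ q, m q ≤ v q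

/-- A strategy: a history of past states together with the current state gives a
mixed action.  (This encodes maps `Q⁺ → 𝒟(X)`.) -/
def Strat (Q X : Type) [Fintype X] : Type := List Q → Q → FDist X

/-- Residual strategy after the history `π` has been played. -/
def residual {X : Type} [Fintype X] (s : Strat Q X) (π : List Q) : Strat Q X :=
  fun h q => s (π ++ h) q

/-- The (positional) strategy associated with a per-state choice of mixed actions. -/
def ofPos {X : Type} [Fintype X] (s : Q → FDist X) : Strat Q X := fun _ q => s q

/-- Probability of reaching the set `S` within `n` steps from current state `q`,
history `h` having been played. -/
def reachSetNAux (δ : Q → A → B → D) (dist : D → FDist Q) (S : Set Q) :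
    ℕ → Strat Q A → Strat Q B → List Q → Q → ℝ
  | 0, _, _, _, q => if q ∈ S then 1 else 0
  | n + 1, sA, sB, h, q =>
      if q ∈ S then 1
      else ∑ q', step δ dist (sA h q) (sB h q) q q' *
        reachSetNAux δ dist S n sA sB (h ++ [q]) q'

/-- Probability of reaching the set `S` within `n` steps from state `q`. -/
def reachSetN (δ : Q → A → B → D) (dist : D → FDist Q) (S : Set Q) (n : ℕ)
    (sA : Strat Q A) (sB : Strat Q B) (q : Q) : ℝ :=
  reachSetNAux δ dist S n sA sB [] q

/-- Probability of reaching the target `T` within `n` steps from state `q`. -/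
def reachN (δ : Q → A → B → D) (dist : D → FDist Q) (T : Q) (n : ℕ)
    (sA : Strat Q A) (sB : Strat Q B) (q : Q) : ℝ :=
  reachSetN δ dist {T} n sA sB q

/-- Probability of eventually reaching the target `T` from state `q`. -/
def reach (δ : Q → A → B → D) (dist : D → FDist Q) (T : Q)
    (sA : Strat Q A) (sB : Strat Q B) (q : Q) : ℝ :=
  ⨆ n : ℕ, reachN δ dist T n sA sB q

/-- The value of a Player A strategy from state `q`. -/
def valA (δ : Q → A → B → D) (dist : D → FDist Q) (T : Q) (sA : Strat Q A) (q : Q) : ℝ :=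
  ⨅ sB : Strat Q B, reach δ dist T sA sB q

/-- The value of the game from state `q`. -/
def value (δ : Q → A → B → D) (dist : D → FDist Q) (T : Q) (q : Q) : ℝ :=
  ⨆ sA : Strat Q A, valA δ dist T sA q

/-- A state is maximizable when Player A has an optimal strategy from it. -/
def Maximizable (δ : Q → A → B → D) (dist : D → FDist Q) (T q : Q) : Prop :=
  ∃ sA : Strat Q A, valA δ dist T sA q = value δ dist T q

/-- A positional Player A strategy locally dominates the valuation `v`. -/
def LocallyDominates (δ : Q → A → B → D) (dist : D → FDist Q)
    (sA : Q → FDist A) (v : Q → ℝ) : Prop :=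
  ∀ q, v q ≤ valStratGF (fun a b => lift dist v (δ q a b)) (sA q)

/-- Transition function ι of the MDP induced by a positional Player A strategy. -/
def stepB [DecidableEq B] (δ : Q → A → B → D) (dist : D → FDist Q)
    (sA : Q → FDist A) (q : Q) (b : B) (q' : Q) : ℝ :=
  step δ dist (sA q) (dirac b) q q'

/-- An end component of the MDP induced by the positional Player A strategy `sA`. -/
structure EndComp [DecidableEq B] (δ : Q → A → B → D) (dist : D → FDist Q)
    (sA : Q → FDist A) where
  states : Set Q
  acts : Q → Set B
  acts_nonempty : ∀ q ∈ states, (acts q).Nonempty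
  closed : ∀ q ∈ states, ∀ b ∈ acts q, ∀ q', stepB δ dist sA q b q' ≠ 0 → q' ∈ states
  connected : ∀ q ∈ states, ∀ q' ∈ states,
    Relation.ReflTransGen
      (fun x y => x ∈ states ∧ ∃ b ∈ acts x, stepB δ dist sA x b y ≠ 0) q q'

/-- `S_D` : the Nature states having a non-zero probability to reach `S`. -/
def natS (dist : D → FDist Q) (S : Set Q) : Set D :=
  { d | ∃ q ∈ S, (dist d).1 q ≠ 0 }

/-- Progressive optimal local strategies at `q` w.r.t. the set `Gd`. -/
def Prog (δ : Q → A → B → D) (dist : D → FDist Q) (m : Q → ℝ) (q : Q)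
    (Gd : Set Q) : Set (FDist A) :=
  { σA | σA ∈ OptA (locPay δ dist m q) ∧
      ∀ b ∈ optActs (locPay δ dist m q) σA, ∃ a ∈ supp σA, δ q a b ∈ natS dist Gd }

/-- Risky optimal local strategies at `q` w.r.t. the set `Bd`. -/
def Risk (δ : Q → A → B → D) (dist : D → FDist Q) (m : Q → ℝ) (q : Q)
    (Bd : Set Q) : Set (FDist A) :=
  { σA | σA ∈ OptA (locPay δ dist m q) ∧
      ∃ b ∈ optActs (locPay δ dist m q) σA, ∃ a ∈ supp σA, δ q a b ∈ natS dist Bd }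

/-- Efficient local strategies: progressive and not risky. -/
def Eff (δ : Q → A → B → D) (dist : D → FDist Q) (m : Q → ℝ) (q : Q)
    (Gd Bd : Set Q) : Set (FDist A) :=
  Prog δ dist m q Gd \ Risk δ dist m q Bd

/-- The increasing sequence of sets of secure states w.r.t. `Bd`. -/
def SecN (δ : Q → A → B → D) (dist : D → FDist Q) (m : Q → ℝ) (T : Q) (Bd : Set Q) :
    ℕ → Set Q
  | 0 => {T}
  | n + 1 => SecN δ dist m T Bd n ∪
      { q | q ∉ Bd ∧ (Eff δ dist m q (SecN δ dist m T Bd n) Bd).Nonempty }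

/-- The set of secure states w.r.t. `Bd`. -/
def Sec (δ : Q → A → B → D) (dist : D → FDist Q) (m : Q → ℝ) (T : Q) (Bd : Set Q) :
    Set Q :=
  (⋃ n : ℕ, SecN δ dist m T Bd n) ∪ { q | m q = 0 }

/-- The sequence of sets of bad states. -/
def BadN (δ : Q → A → B → D) (dist : D → FDist Q) (m : Q → ℝ) (T : Q) : ℕ → Set Q
  | 0 => ∅
  | n + 1 => (Sec δ dist m T (BadN δ dist m T n))ᶜ

/-- The set of bad states. -/
def Bad (δ : Q → A → B → D) (dist : D → FDist Q) (m : Q → ℝ) (T : Q) : Set Q :=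
  BadN δ dist m T (Fintype.card Q)

/-- `α[y]` : the total valuation extending the partial valuation `α : O∖E → [0,1]`
with the value `y` on `E`. -/
def extendVal {O : Type} (E : Set O) (α : O → ℝ) (y : ℝ) : O → ℝ :=
  fun o => if o ∈ E then y else α o

/-- The map `f_α : y ↦ val_{⟨F, α[y]⟩}`. -/
def fval {O : Type} (ρ : A → B → O) (E : Set O) (α : O → ℝ) (y : ℝ) : ℝ :=
  valGF (fun a b => extendVal E α y (ρ a b))

/-- `v` is the least fixed point of `f_α` on `[0,1]`. -/
def IsLfpVal {O : Type} (ρ : A → B → O) (E : Set O) (α : O → ℝ) (v : ℝ) : Prop :=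
  v ∈ Set.Icc (0:ℝ) 1 ∧ fval ρ E α v = v ∧
    ∀ y ∈ Set.Icc (0:ℝ) 1, fval ρ E α y = y → v ≤ y

/-- The game form `ρ` is reach-maximizable w.r.t. the partial valuation `α : O∖E → [0,1]`. -/
def RMwrt {O : Type} (ρ : A → B → O) (E : Set O) (α : O → ℝ) : Prop :=
  ∀ v : ℝ, IsLfpVal ρ E α v →
    v = 0 ∨
      ∃ σA ∈ OptA (fun a b => extendVal E α v (ρ a b)),
        ∀ b ∈ optActs (fun a b => extendVal E α v (ρ a b)) σA,
          ∃ a ∈ supp σA, ρ a b ∉ E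

/-- A reach-maximizable game form: RM w.r.t. every partial valuation of its outcomes. -/
def RMform {O : Type} (ρ : A → B → O) : Prop :=
  ∀ (E : Set O) (α : O → ℝ), (∀ o ∉ E, α o ∈ Set.Icc (0:ℝ) 1) → RMwrt ρ E α

/-- A determined game form. -/
def Determined {O : Type} (ρ : A → B → O) : Prop :=
  ∀ E : Set O, (∃ a, ∀ b, ρ a b ∈ E) ∨ (∃ b, ∀ a, ρ a b ∉ E)

/-- Transition function of the three-state reachability game `C_{(F,α)}`:
state `0` is `q₀`, state `1` is the target `⊤`, state `2` is the bin `⊥`. -/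
def triδ {O : Type} (ρ : A → B → O) (E : Set O) :
    Fin 3 → A → B → (Fin 3 ⊕ {o : O // o ∉ E}) :=
  fun s a b =>
    if s = 0 then
      if h : ρ a b ∈ E then Sum.inl 0 else Sum.inr ⟨ρ a b, h⟩
    else Sum.inl s

/-- Nature distributions of the three-state reachability game `C_{(F,α)}`. -/
def triDist {O : Type} (E : Set O) (α : O → ℝ)
    (hα : ∀ o ∉ E, α o ∈ Set.Icc (0:ℝ) 1) :
    (Fin 3 ⊕ {o : O // o ∉ E}) → FDist (Fin 3) := fun d =>
  match d with
  | Sum.inl t => dirac t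
  | Sum.inr x =>
      ⟨![0, α x.1, 1 - α x.1], by
        obtain ⟨h0, h1⟩ := hα x.1 x.2
        constructor
        · intro s
          fin_cases s <;> simp <;> linarith
        · simp [Fin.sum_univ_three]⟩

/-- An abstract (finite) game form with actions `A` and `B`. -/
structure GameForm (A B : Type) where
  O : Type
  fin : Fintype O
  ρ : A → B → O

/-- All local interactions of the arena `δ` belong to the set `𝒢` of game forms
(up to a renaming of the outcomes into Nature states). -/
def UsesForms {Q D : Type} (𝒢 : Set (GameForm A B)) (δ : Q → A → B → D) : Prop :=
  ∀ q, ∃ F ∈ 𝒢, ∃ g : F.O → D, δ q = fun a b => g (F.ρ a b)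

/-- The sequence of iterates of Δ starting from the valuation `1_{⊤}`. -/
def vseq (δ : Q → A → B → D) (dist : D → FDist Q) (T : Q) : ℕ → Q → ℝ
  | 0 => fun q => if q = T then 1 else 0
  | n + 1 => Δop δ dist T (vseq δ dist T n)

/-- Relevant paths w.r.t. the strategy `sA` from the state `q₀`: the pair `(h, q)`
encodes the path `h · q` (history `h`, current state `q`). -/
inductive Relevant [DecidableEq B] (δ : Q → A → B → D) (dist : D → FDist Q)
    (m : Q → ℝ) (sA : Strat Q A) (q₀ : Q) : List Q → Q → Prop
  | base : Relevant δ dist m sA q₀ [] q₀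
  | step {h : List Q} {q q' : Q} :
      Relevant δ dist m sA q₀ h q →
      (∃ b ∈ optActs (locPay δ dist m q) (sA h q),
        0 < CRG.step δ dist (sA h q) (dirac b) q q') →
      Relevant δ dist m sA q₀ (h ++ [q]) q'

end CRG

namespace FDist

variable {X : Type} [Fintype X]

instance [Nonempty X] : Nonempty (FDist X) := ⟨CRG.dirac (Classical.arbitrary X)⟩

lemma nonneg (σ : FDist X) (x : X) : 0 ≤ σ.1 x := σ.2.1 x

lemma sum_mul_const (σ : FDist X) (c : ℝ) : ∑ x, σ.1 x * c = c := by
  rw [← Finset.sum_mul, σ.2.2, one_mul]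

lemma sum_mul_add_const (σ : FDist X) (f : X → ℝ) (c : ℝ) :
    ∑ x, σ.1 x * (f x + c) = ∑ x, σ.1 x * f x + c := by
  simp only [mul_add, Finset.sum_add_distrib, sum_mul_const]

lemma sum_mul_mono (σ : FDist X) {f g : X → ℝ} (h : ∀ x, f x ≤ g x) :
    ∑ x, σ.1 x * f x ≤ ∑ x, σ.1 x * g x :=
  Finset.sum_le_sum fun x _ => mul_le_mul_of_nonneg_left (h x) (σ.nonneg x)

lemma sum_mul_le (σ : FDist X) {f : X → ℝ} {c : ℝ} (h : ∀ x, σ.1 x ≠ 0 → f x ≤ c) :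
    ∑ x, σ.1 x * f x ≤ c := by
  calc ∑ x, σ.1 x * f x ≤ ∑ x, σ.1 x * c := Finset.sum_le_sum fun x _ => by
        by_cases hx : σ.1 x = 0
        · simp [hx]
        · exact mul_le_mul_of_nonneg_left (h x hx) (σ.nonneg x)
    _ = c := σ.sum_mul_const c

lemma le_sum_mul (σ : FDist X) {f : X → ℝ} {c : ℝ} (h : ∀ x, c ≤ f x) :
    c ≤ ∑ x, σ.1 x * f x :=
  (σ.sum_mul_const c).ge.trans (σ.sum_mul_mono h)

lemma sum_mul_eq (σ : FDist X) {f : X → ℝ} {c : ℝ} (h : ∀ x, σ.1 x ≠ 0 → f x = c) :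
    ∑ x, σ.1 x * f x = c :=
  (Finset.sum_congr rfl fun x _ => by
    by_cases hx : σ.1 x = 0
    · simp [hx]
    · rw [h x hx]).trans (σ.sum_mul_const c)

lemma eq_of_le_sum_mul (σ : FDist X) {f : X → ℝ} {c : ℝ} (h : ∀ x, σ.1 x ≠ 0 → f x ≤ c)
    (hc : c ≤ ∑ x, σ.1 x * f x) {x : X} (hx : σ.1 x ≠ 0) : f x = c := by
  by_contra hne
  have hlt : ∑ y, σ.1 y * f y < ∑ y, σ.1 y * c := by
    refine Finset.sum_lt_sum (fun y _ => ?_) ⟨x, Finset.mem_univ x, ?_⟩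
    · by_cases hy : σ.1 y = 0
      · simp [hy]
      · exact mul_le_mul_of_nonneg_left (h y hy) (σ.nonneg y)
    · exact mul_lt_mul_of_pos_left (lt_of_le_of_ne (h x hx) hne)
        (lt_of_le_of_ne (σ.nonneg x) (Ne.symm hx))
  linarith [σ.sum_mul_const c]

lemma sum_dirac_mul [DecidableEq X] (x : X) (f : X → ℝ) : ∑ y, (CRG.dirac x).1 y * f y = f x := by
  simp [CRG.dirac]

end FDist

namespace CRG

open Finset

section GameForm

variable {A B : Type} [Fintype A]

lemma outB_add_const (u : A → B → ℝ) (c : ℝ) (σA : FDist A) (b : B) :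
    outB (fun a b => u a b + c) σA b = outB u σA b + c :=
  σA.sum_mul_add_const _ c

variable [Fintype B]

lemma out_eq_sum_outB (u : A → B → ℝ) (σA : FDist A) (σB : FDist B) :
    out u σA σB = ∑ b, σB.1 b * outB u σA b := by
  simp only [out, outB, Finset.mul_sum]
  rw [Finset.sum_comm]
  exact Finset.sum_congr rfl fun b _ => Finset.sum_congr rfl fun a _ => by ring

lemma out_dirac (u : A → B → ℝ) (σA : FDist A) (b : B) :
    out u σA (dirac b) = outB u σA b := by
  rw [out_eq_sum_outB, FDist.sum_dirac_mul]

lemma out_add_const (u : A → B → ℝ) (c : ℝ) (σA : FDist A) (σB : FDist B) :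
    out (fun a b => u a b + c) σA σB = out u σA σB + c := by
  simp only [out_eq_sum_outB, outB_add_const, σB.sum_mul_add_const]

variable [Nonempty B]

lemma valStratGF_eq_inf' (u : A → B → ℝ) (σA : FDist A) :
    valStratGF u σA = univ.inf' univ_nonempty (outB u σA) := by
  have hle : ∀ σB, univ.inf' univ_nonempty (outB u σA) ≤ out u σA σB := fun σB => by
    rw [out_eq_sum_outB]
    exact σB.le_sum_mul fun b => inf'_le _ (mem_univ b)
  obtain ⟨b₀, -, hb₀⟩ := exists_mem_eq_inf' univ_nonempty (outB u σA)
  refine le_antisymm ?_ (le_ciInf hle)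
  calc valStratGF u σA ≤ out u σA (dirac b₀) := ciInf_le ⟨_, Set.forall_mem_range.2 hle⟩ _
    _ = _ := by rw [out_dirac, hb₀]

lemma valStratGF_le_outB (u : A → B → ℝ) (σA : FDist A) (b : B) :
    valStratGF u σA ≤ outB u σA b := by
  rw [valStratGF_eq_inf']
  exact inf'_le _ (mem_univ b)

lemma valStratGF_le_out (u : A → B → ℝ) (σA : FDist A) (σB : FDist B) :
    valStratGF u σA ≤ out u σA σB := by
  rw [out_eq_sum_outB]
  exact σB.le_sum_mul (valStratGF_le_outB u σA)

lemma exists_mem_optActs (u : A → B → ℝ) (σA : FDist A) : ∃ b, b ∈ optActs u σA := by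
  obtain ⟨b, -, hb⟩ := exists_mem_eq_inf' univ_nonempty (outB u σA)
  exact ⟨b, by rw [optActs, Set.mem_ofPred_eq, valStratGF_eq_inf', hb]⟩

lemma valStratGF_mono {u u' : A → B → ℝ} (h : ∀ a b, u a b ≤ u' a b) (σA : FDist A) :
    valStratGF u σA ≤ valStratGF u' σA := by
  simp only [valStratGF_eq_inf']
  exact le_inf' _ _ fun b _ => (inf'_le _ (mem_univ b)).trans (σA.sum_mul_mono fun a => h a b)

lemma valStratGF_add_const (u : A → B → ℝ) (c : ℝ) (σA : FDist A) :
    valStratGF (fun a b => u a b + c) σA = valStratGF u σA + c := by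
  simp only [valStratGF_eq_inf', outB_add_const]
  apply le_antisymm
  · obtain ⟨b, -, hb⟩ := exists_mem_eq_inf' univ_nonempty (outB u σA)
    rw [hb]
    exact inf'_le (fun b => outB u σA b + c) (mem_univ b)
  · exact le_inf' _ _ fun b _ => by linarith [inf'_le (outB u σA) (mem_univ b)]

end GameForm

section LocalValue

variable {A B : Type}

/-- Common properties of `valGF` and `valStratGF · σA`, which let the game operator `Δop` and the
operator of the MDP induced by a positional strategy be treated together (`bellmanOp`). -/
structure IsLocalValue (L : (A → B → ℝ) → ℝ) : Prop where
  mono : ∀ {u u' : A → B → ℝ}, (∀ a b, u a b ≤ u' a b) → L u ≤ L u'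
  add_const : ∀ (u : A → B → ℝ) (c : ℝ), L (fun a b => u a b + c) = L u + c
  const : ∀ c : ℝ, L (fun _ _ => c) = c

lemma IsLocalValue.le_of_le {L : (A → B → ℝ) → ℝ} (hL : IsLocalValue L) {u : A → B → ℝ}
    {c : ℝ} (h : ∀ a b, u a b ≤ c) : L u ≤ c :=
  (hL.mono h).trans_eq (hL.const c)

lemma IsLocalValue.ge_of_ge {L : (A → B → ℝ) → ℝ} (hL : IsLocalValue L) {u : A → B → ℝ}
    {c : ℝ} (h : ∀ a b, c ≤ u a b) : c ≤ L u :=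
  (hL.const c).ge.trans (hL.mono h)

variable [Fintype A] [Fintype B]

lemma exists_lt_valStratGF [Nonempty A] {u : A → B → ℝ} {c : ℝ} (h : c < valGF u) :
    ∃ σA, c < valStratGF u σA :=
  exists_lt_of_lt_ciSup h

variable [Nonempty B]

lemma isLocalValue_valStratGF (σA : FDist A) :
    IsLocalValue fun u : A → B → ℝ => valStratGF u σA where
  mono h := valStratGF_mono h σA
  add_const u c := valStratGF_add_const u c σA
  const c := by
    have : outB (fun (_ : A) (_ : B) => c) σA = fun _ => c := funext fun _ => σA.sum_mul_const c
    rw [valStratGF_eq_inf', this, inf'_const]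

lemma bddAbove_range_valStratGF (u : A → B → ℝ) : BddAbove (Set.range (valStratGF u)) := by
  obtain ⟨c, hc⟩ := Finite.exists_le fun p : A × B => u p.1 p.2
  refine ⟨c, Set.forall_mem_range.2 fun σA => ?_⟩
  exact (valStratGF_le_outB u σA (Classical.arbitrary B)).trans
    (σA.sum_mul_le fun a _ => hc (a, _))

lemma valStratGF_le_valGF (u : A → B → ℝ) (σA : FDist A) : valStratGF u σA ≤ valGF u :=
  le_ciSup (bddAbove_range_valStratGF u) σA

variable [Nonempty A]

lemma valGF_mono {u u' : A → B → ℝ} (h : ∀ a b, u a b ≤ u' a b) : valGF u ≤ valGF u' :=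
  ciSup_le fun σA => (valStratGF_mono h σA).trans (valStratGF_le_valGF u' σA)

lemma valGF_add_const (u : A → B → ℝ) (c : ℝ) :
    valGF (fun a b => u a b + c) = valGF u + c := by
  simp only [valGF, valStratGF_add_const]
  exact (ciSup_add (bddAbove_range_valStratGF u) c).symm

lemma isLocalValue_valGF : IsLocalValue (valGF : (A → B → ℝ) → ℝ) where
  mono := valGF_mono
  add_const := valGF_add_const
  const c := by simp only [valGF, (isLocalValue_valStratGF _).const, ciSup_const]

lemma fval_le_add {O : Type} (ρ : A → B → O) (E : Set O) (α : O → ℝ) {y y' : ℝ} (hy : y ≤ y') :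
    fval ρ E α y' ≤ fval ρ E α y + (y' - y) := by
  rw [fval, fval, ← valGF_add_const]
  refine valGF_mono fun a b => ?_
  unfold extendVal
  split_ifs <;> linarith

end LocalValue

section ValueIteration

variable {Q : Type}

/-- Conditions under which the Kleene iterates `Φ^[n] v₀` increase to a fixed point of `Φ`
(`IsValueIteration.map_iterSup`) lying below every pre-fixed point above `v₀`. -/
structure IsValueIteration (Φ : (Q → ℝ) → Q → ℝ) (v₀ : Q → ℝ) : Prop where
  mono : Monotone Φ
  shift_le : ∀ (v : Q → ℝ) (c : ℝ), 0 ≤ c → Φ (fun q => v q + c) ≤ fun q => Φ v q + c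
  le_one : ∀ v, v ≤ 1 → Φ v ≤ 1
  start_le_one : v₀ ≤ 1
  start_le : v₀ ≤ Φ v₀

def iterSup (Φ : (Q → ℝ) → Q → ℝ) (v₀ : Q → ℝ) : Q → ℝ := fun q => ⨆ n, Φ^[n] v₀ q

namespace IsValueIteration

variable {Φ : (Q → ℝ) → Q → ℝ} {v₀ : Q → ℝ}

lemma iterate_le_one (hΦ : IsValueIteration Φ v₀) : ∀ n, Φ^[n] v₀ ≤ 1
  | 0 => hΦ.start_le_one
  | n + 1 => by
    rw [Function.iterate_succ_apply']
    exact hΦ.le_one _ (hΦ.iterate_le_one n)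

lemma monotone_iterate (hΦ : IsValueIteration Φ v₀) : Monotone fun n => Φ^[n] v₀ :=
  hΦ.mono.monotone_iterate_of_le_map hΦ.start_le

lemma iterate_le_iterSup (hΦ : IsValueIteration Φ v₀) (n : ℕ) : Φ^[n] v₀ ≤ iterSup Φ v₀ :=
  fun q => le_ciSup ⟨1, Set.forall_mem_range.2 fun k => hΦ.iterate_le_one k q⟩ n

lemma iterSup_le_one (hΦ : IsValueIteration Φ v₀) : iterSup Φ v₀ ≤ 1 :=
  fun q => ciSup_le fun n => hΦ.iterate_le_one n q

lemma iterSup_le_of_map_le (hΦ : IsValueIteration Φ v₀) {w : Q → ℝ} (h₀ : v₀ ≤ w)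
    (hw : Φ w ≤ w) : iterSup Φ v₀ ≤ w := by
  have key : ∀ n, Φ^[n] v₀ ≤ w := fun n => by
    induction n with
    | zero => exact h₀
    | succ n ih =>
      rw [Function.iterate_succ_apply']
      exact (hΦ.mono ih).trans hw
  exact fun q => ciSup_le fun n => key n q

lemma exists_iterate_ge [Fintype Q] (hΦ : IsValueIteration Φ v₀) {ε : ℝ} (hε : 0 < ε) :
    ∃ N, ∀ q, iterSup Φ v₀ q - ε ≤ Φ^[N] v₀ q := by
  choose n hn using fun q => exists_lt_of_lt_ciSup (sub_lt_self (iterSup Φ v₀ q) hε)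
  exact ⟨Finset.univ.sup n, fun q =>
    (hn q).le.trans (hΦ.monotone_iterate (Finset.le_sup (Finset.mem_univ q)) q)⟩

lemma map_iterSup [Fintype Q] (hΦ : IsValueIteration Φ v₀) :
    Φ (iterSup Φ v₀) = iterSup Φ v₀ := by
  funext q
  refine le_antisymm (le_of_forall_pos_le_add fun ε hε => ?_) (ciSup_le fun n => ?_)
  · obtain ⟨N, hN⟩ := hΦ.exists_iterate_ge hε
    calc Φ (iterSup Φ v₀) q ≤ Φ (fun q => Φ^[N] v₀ q + ε) q :=
          hΦ.mono (fun q => by linarith [hN q]) q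
      _ ≤ Φ^[N + 1] v₀ q + ε := by
          rw [Function.iterate_succ_apply']
          exact hΦ.shift_le _ ε hε.le q
      _ ≤ iterSup Φ v₀ q + ε := by linarith [hΦ.iterate_le_iterSup (N + 1) q]
  · calc Φ^[n] v₀ q ≤ Φ^[n + 1] v₀ q := hΦ.monotone_iterate n.le_succ q
      _ ≤ Φ (iterSup Φ v₀) q := by
          rw [Function.iterate_succ_apply']
          exact hΦ.mono (hΦ.iterate_le_iterSup n) q

end IsValueIteration

end ValueIteration

section Bellman

variable {A B Q D : Type} [Fintype Q] (δ : Q → A → B → D) (dist : D → FDist Q) (T : Q)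

lemma lift_mono {v w : Q → ℝ} (h : ∀ q, v q ≤ w q) (d : D) : lift dist v d ≤ lift dist w d :=
  (dist d).sum_mul_mono h

lemma lift_add_const (v : Q → ℝ) (c : ℝ) (d : D) :
    lift dist (fun q => v q + c) d = lift dist v d + c :=
  (dist d).sum_mul_add_const v c

lemma locPay_add_const (v : Q → ℝ) (c : ℝ) (q : Q) :
    locPay δ dist (fun q => v q + c) q = fun a b => locPay δ dist v q a b + c :=
  funext fun _ => funext fun _ => lift_add_const dist v c _

lemma locPay_const (c : ℝ) (q : Q) : locPay δ dist (fun _ => c) q = fun _ _ => c :=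
  funext fun _ => funext fun _ => (dist _).sum_mul_const c

lemma lift_eq_of_forall {v : Q → ℝ} {c : ℝ} {d : D} (h : ∀ q, (dist d).1 q ≠ 0 → v q = c) :
    lift dist v d = c :=
  (dist d).sum_mul_eq h

def reachIndicator (T : Q) : Q → ℝ := fun q => if q = T then 1 else 0

def bellmanOp (L : Q → (A → B → ℝ) → ℝ) (v : Q → ℝ) : Q → ℝ :=
  fun q => if q = T then 1 else L q (locPay δ dist v q)

lemma Δop_eq_bellmanOp [Fintype A] [Fintype B] :
    Δop δ dist T = bellmanOp δ dist T fun _ => valGF := rfl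

variable {L : Q → (A → B → ℝ) → ℝ}

lemma isValueIteration_bellmanOp (hL : ∀ q, IsLocalValue (L q)) :
    IsValueIteration (bellmanOp δ dist T L) (reachIndicator T) where
  mono v w h q := by
    unfold bellmanOp
    split_ifs
    · exact le_rfl
    · exact (hL q).mono fun a b => lift_mono dist h _
  shift_le v c hc q := by
    show bellmanOp δ dist T L (fun q => v q + c) q ≤ bellmanOp δ dist T L v q + c
    unfold bellmanOp
    split_ifs
    · linarith
    · rw [locPay_add_const, (hL q).add_const]
  le_one v hv q := by
    unfold bellmanOp
    split_ifs
    · exact le_rfl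
    · exact (hL q).le_of_le fun a b => (dist _).sum_mul_le fun q' _ => hv q'
  start_le_one q := by
    unfold reachIndicator
    split_ifs <;> norm_num
  start_le q := by
    unfold bellmanOp reachIndicator
    split_ifs
    · exact le_rfl
    · exact (hL q).ge_of_ge fun a b => (dist _).le_sum_mul fun q' => by split_ifs <;> norm_num

def valueIter (L : Q → (A → B → ℝ) → ℝ) : Q → ℝ :=
  iterSup (bellmanOp δ dist T L) (reachIndicator T)

variable {δ dist T}

lemma reachIndicator_le_valueIter (hL : ∀ q, IsLocalValue (L q)) :
    reachIndicator T ≤ valueIter δ dist T L :=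
  (isValueIteration_bellmanOp δ dist T hL).iterate_le_iterSup 0

lemma valueIter_nonneg (hL : ∀ q, IsLocalValue (L q)) (q : Q) : 0 ≤ valueIter δ dist T L q :=
  le_trans (by unfold reachIndicator; split_ifs <;> norm_num) (reachIndicator_le_valueIter hL q)

lemma valueIter_le_one (hL : ∀ q, IsLocalValue (L q)) (q : Q) : valueIter δ dist T L q ≤ 1 :=
  (isValueIteration_bellmanOp δ dist T hL).iterSup_le_one q

lemma valueIter_target (hL : ∀ q, IsLocalValue (L q)) : valueIter δ dist T L T = 1 :=
  le_antisymm (valueIter_le_one hL T) <| by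
    simpa [reachIndicator] using reachIndicator_le_valueIter (δ := δ) (dist := dist) (T := T) hL T

lemma valueIter_fixed (hL : ∀ q, IsLocalValue (L q)) {q : Q} (hq : q ≠ T) :
    L q (locPay δ dist (valueIter δ dist T L) q) = valueIter δ dist T L q := by
  have := congrFun (isValueIteration_bellmanOp δ dist T hL).map_iterSup q
  rwa [bellmanOp, if_neg hq] at this

lemma valueIter_le_of_map_le (hL : ∀ q, IsLocalValue (L q)) {w : Q → ℝ} (hw₀ : 0 ≤ w)
    (hw : bellmanOp δ dist T L w ≤ w) : valueIter δ dist T L ≤ w := by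
  refine (isValueIteration_bellmanOp δ dist T hL).iterSup_le_of_map_le (fun q => ?_) hw
  unfold reachIndicator
  split_ifs with hq
  · simpa [bellmanOp, hq] using hw T
  · exact hw₀ q

end Bellman

section Reach

variable {A B Q D : Type} [Fintype A] [Fintype B] [Fintype Q]
  (δ : Q → A → B → D) (dist : D → FDist Q)

lemma step_nonneg (σA : FDist A) (σB : FDist B) (q q' : Q) : 0 ≤ step δ dist σA σB q q' :=
  sum_nonneg fun a _ => sum_nonneg fun b _ =>
    mul_nonneg (mul_nonneg (σA.nonneg a) (σB.nonneg b)) ((dist _).nonneg q')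

lemma sum_step_mul (σA : FDist A) (σB : FDist B) (q : Q) (ψ : Q → ℝ) :
    ∑ q', step δ dist σA σB q q' * ψ q' = out (locPay δ dist ψ q) σA σB := by
  simp only [step, out, locPay, lift, Finset.sum_mul, Finset.mul_sum]
  rw [Finset.sum_comm]
  refine sum_congr rfl fun a _ => ?_
  rw [Finset.sum_comm]
  exact sum_congr rfl fun b _ => sum_congr rfl fun q' _ => by ring

lemma sum_step_dirac_mul (σA : FDist A) (b : B) (q : Q) (ψ : Q → ℝ) :
    ∑ q', step δ dist σA (dirac b) q q' * ψ q' = outB (locPay δ dist ψ q) σA b := by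
  rw [sum_step_mul, out_dirac]

lemma out_const (c : ℝ) (σA : FDist A) (σB : FDist B) : out (fun _ _ => c) σA σB = c := by
  simp only [out_eq_sum_outB, outB, FDist.sum_mul_const]

def stepDist (σA : FDist A) (σB : FDist B) (q : Q) : FDist Q :=
  ⟨step δ dist σA σB q, step_nonneg δ dist σA σB q, by
    simpa only [mul_one, locPay_const, out_const] using sum_step_mul δ dist σA σB q fun _ => 1⟩

lemma step_dirac_ne_zero_iff (σA : FDist A) (b : B) (q q' : Q) :
    step δ dist σA (dirac b) q q' ≠ 0 ↔ ∃ a ∈ supp σA, (dist (δ q a b)).1 q' ≠ 0 := by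
  have hstep : step δ dist σA (dirac b) q q' = ∑ a, σA.1 a * (dist (δ q a b)).1 q' := by
    simp [step, dirac]
  rw [hstep, Ne, sum_eq_zero_iff_of_nonneg fun a _ => mul_nonneg (σA.nonneg a) ((dist _).nonneg q')]
  simp [supp]

variable {δ dist} {T : Q} {sA : Strat Q A} {sB : Strat Q B}

lemma reachSetNAux_le_of_superharmonic {ψ : Q → ℝ} (hψ₀ : 0 ≤ ψ) (hψT : 1 ≤ ψ T)
    (hψ : ∀ h q, q ≠ T → out (locPay δ dist ψ q) (sA h q) (sB h q) ≤ ψ q) :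
    ∀ n h q, reachSetNAux δ dist {T} n sA sB h q ≤ ψ q := by
  intro n
  induction n with
  | zero =>
    intro h q
    simp only [reachSetNAux, Set.mem_singleton_iff]
    split_ifs with hq
    · exact hq ▸ hψT
    · exact hψ₀ q
  | succ n ih =>
    intro h q
    simp only [reachSetNAux, Set.mem_singleton_iff]
    split_ifs with hq
    · exact hq ▸ hψT
    · calc _ ≤ ∑ q', step δ dist (sA h q) (sB h q) q q' * ψ q' :=
            (stepDist δ dist _ _ q).sum_mul_mono fun q' => ih _ q'
        _ ≤ ψ q := (sum_step_mul δ dist _ _ q ψ).trans_le (hψ h q hq)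

/-- A lower bound along plays of length `n`, for potentials `ψ k` indexed by the remaining
horizon `k`. -/
lemma le_reachSetNAux_of_subharmonic {ψ : ℕ → Q → ℝ} {n : ℕ} (hψ₁ : ∀ k q, ψ k q ≤ 1)
    (hψ₀ : ∀ q, q ≠ T → ψ 0 q ≤ 0)
    (hψ : ∀ k h q, h.length + k + 1 = n → q ≠ T →
      ψ (k + 1) q ≤ out (locPay δ dist (ψ k) q) (sA h q) (sB h q)) :
    ∀ k h q, h.length + k = n → ψ k q ≤ reachSetNAux δ dist {T} k sA sB h q := by
  intro k
  induction k with
  | zero =>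
    intro h q _
    simp only [reachSetNAux, Set.mem_singleton_iff]
    split_ifs with hq
    · exact hψ₁ 0 q
    · exact hψ₀ q hq
  | succ k ih =>
    intro h q hn
    simp only [reachSetNAux, Set.mem_singleton_iff]
    split_ifs with hq
    · exact hψ₁ _ q
    · calc ψ (k + 1) q ≤ ∑ q', step δ dist (sA h q) (sB h q) q q' * ψ k q' := by
            rw [sum_step_mul]
            exact hψ k h q (by omega) hq
        _ ≤ _ := (stepDist δ dist _ _ q).sum_mul_mono fun q' =>
            ih _ q' (by simp only [List.length_append, List.length_singleton]; omega)

lemma reachN_le_one (n : ℕ) (q : Q) : reachN δ dist T n sA sB q ≤ 1 :=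
  reachSetNAux_le_of_superharmonic (ψ := fun _ => 1) (fun _ => zero_le_one) le_rfl
    (fun h q _ => by rw [locPay_const, out_const]) n [] q

lemma reachN_le_reach (n : ℕ) (q : Q) :
    reachN δ dist T n sA sB q ≤ reach δ dist T sA sB q :=
  le_ciSup ⟨1, Set.forall_mem_range.2 fun k => reachN_le_one k q⟩ n

lemma reach_le_of_superharmonic {ψ : Q → ℝ} (hψ₀ : 0 ≤ ψ) (hψT : 1 ≤ ψ T)
    (hψ : ∀ h q, q ≠ T → out (locPay δ dist ψ q) (sA h q) (sB h q) ≤ ψ q) (q : Q) :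
    reach δ dist T sA sB q ≤ ψ q :=
  ciSup_le fun n => reachSetNAux_le_of_superharmonic hψ₀ hψT hψ n [] q

lemma reach_nonneg (q : Q) : 0 ≤ reach δ dist T sA sB q :=
  le_trans (by simp only [reachN, reachSetN, reachSetNAux]; split_ifs <;> norm_num)
    (reachN_le_reach 0 q)

lemma reach_le_one (q : Q) : reach δ dist T sA sB q ≤ 1 :=
  ciSup_le fun n => reachN_le_one n q

instance {X : Type} [Fintype X] [Nonempty X] : Nonempty (Strat Q X) :=
  ⟨fun _ _ => Classical.arbitrary _⟩

lemma valA_le_reach (sA : Strat Q A) (sB : Strat Q B) (q : Q) :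
    valA δ dist T sA q ≤ reach δ dist T sA sB q :=
  ciInf_le ⟨0, Set.forall_mem_range.2 fun _ => reach_nonneg q⟩ sB

lemma le_valA [Nonempty B] {c : ℝ} {q : Q} (h : ∀ sB : Strat Q B, c ≤ reach δ dist T sA sB q) :
    c ≤ valA δ dist T sA q :=
  le_ciInf h

lemma value_le [Nonempty A] {c : ℝ} {q : Q} (h : ∀ sA : Strat Q A, valA δ dist T sA q ≤ c) :
    value δ dist T q ≤ c :=
  ciSup_le h

variable [Nonempty B]

lemma valA_le_value (sA : Strat Q A) (q : Q) : valA δ dist T sA q ≤ value δ dist T q :=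
  le_ciSup (f := fun sA => valA δ dist T sA q) ⟨1, Set.forall_mem_range.2 fun sA' =>
    (valA_le_reach sA' (Classical.arbitrary _) q).trans (reach_le_one q)⟩ sA

end Reach

section GameValue

variable {A B Q D : Type} [Fintype A] [Fintype B] [Fintype Q] [Nonempty A] [Nonempty B]
  (δ : Q → A → B → D) (dist : D → FDist Q) (T : Q)

def lfpΔ : Q → ℝ := valueIter δ dist T fun _ => valGF

variable {δ dist T}

lemma lfpΔ_nonneg (q : Q) : 0 ≤ lfpΔ δ dist T q := valueIter_nonneg (fun _ => isLocalValue_valGF) q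

lemma lfpΔ_le_one (q : Q) : lfpΔ δ dist T q ≤ 1 := valueIter_le_one (fun _ => isLocalValue_valGF) q

lemma lfpΔ_target : lfpΔ δ dist T T = 1 := valueIter_target fun _ => isLocalValue_valGF

lemma valGF_lfpΔ {q : Q} (hq : q ≠ T) : valGF (locPay δ dist (lfpΔ δ dist T) q) = lfpΔ δ dist T q :=
  valueIter_fixed (fun _ => isLocalValue_valGF) hq

lemma Δop_mono {v w : Q → ℝ} (h : v ≤ w) : Δop δ dist T v ≤ Δop δ dist T w :=
  (isValueIteration_bellmanOp δ dist T fun _ => isLocalValue_valGF).mono h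

lemma Δop_lfpΔ : Δop δ dist T (lfpΔ δ dist T) = lfpΔ δ dist T :=
  (isValueIteration_bellmanOp δ dist T fun _ => isLocalValue_valGF).map_iterSup

lemma lfpΔ_le_of_Δop_le {w : Q → ℝ} (hw₀ : 0 ≤ w) (hw : Δop δ dist T w ≤ w) :
    lfpΔ δ dist T ≤ w :=
  valueIter_le_of_map_le (fun _ => isLocalValue_valGF) hw₀ hw

/-- Player B answers every move of Player A by a local best response against `lfpΔ`. -/
lemma value_le_lfpΔ (q : Q) : value δ dist T q ≤ lfpΔ δ dist T q := by
  choose β hβ using fun q σA => exists_mem_optActs (locPay δ dist (lfpΔ δ dist T) q) σA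
  refine value_le fun sA => (valA_le_reach sA (fun h q => dirac (β q (sA h q))) q).trans ?_
  refine reach_le_of_superharmonic lfpΔ_nonneg lfpΔ_target.ge (fun h q hq => ?_) q
  rw [out_dirac, hβ q (sA h q), ← valGF_lfpΔ hq]
  exact valStratGF_le_valGF _ _

/-- Player A plays, with `k` steps to go, an `ε / (n + 1)`-optimal strategy of the local game
valued by the `k`-th value iterate. -/
lemma iterate_Δop_le_value (n : ℕ) (q₀ : Q) :
    (Δop δ dist T)^[n] (reachIndicator T) q₀ ≤ value δ dist T q₀ := by
  set v := fun k => (Δop δ dist T)^[k] (reachIndicator T)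
  have hv : ∀ k q, v k q ≤ 1 := fun k q =>
    (isValueIteration_bellmanOp δ dist T fun _ => isLocalValue_valGF).iterate_le_one k q
  refine le_of_forall_pos_le_add fun ε hε => ?_
  set ε' := ε / (n + 1)
  have hε' : 0 < ε' := by positivity
  choose σ hσ using fun k q =>
    exists_lt_valStratGF (sub_lt_self (valGF (locPay δ dist (v k) q)) hε')
  let sA : Strat Q A := fun h q => σ (n - 1 - h.length) q
  have hstep : ∀ (sB : Strat Q B) k h q, h.length + k + 1 = n → q ≠ T →
      v (k + 1) q + -((k + 1 : ℕ) * ε') ≤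
        out (locPay δ dist (fun q => v k q + -(k * ε')) q) (sA h q) (sB h q) := by
    intro sB k h q hk hq
    have hsA : sA h q = σ k q := by simp only [sA]; congr 1; omega
    have hvk : v (k + 1) q = valGF (locPay δ dist (v k) q) := by
      simp only [v, Function.iterate_succ_apply', Δop, if_neg hq]; rfl
    rw [locPay_add_const, out_add_const, hsA, hvk]
    push_cast
    linarith [hσ k q, valStratGF_le_out (locPay δ dist (v k) q) (σ k q) (sB h q)]
  have hreach : ∀ sB, v n q₀ + -(n * ε') ≤ reachN δ dist T n sA sB q₀ := fun sB =>
    le_reachSetNAux_of_subharmonic (ψ := fun k q => v k q + -(k * ε')) (n := n)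
      (fun k q => by nlinarith [hv k q]) (fun q hq => by simp [v, reachIndicator, hq])
      (hstep sB) n [] q₀ (by simp)
  have hnε : n * ε' ≤ ε := by
    rw [mul_div_assoc']
    exact div_le_of_le_mul₀ (by positivity) hε.le (by nlinarith)
  have hvalA : v n q₀ + -(n * ε') ≤ valA δ dist T sA q₀ :=
    le_valA fun sB => (hreach sB).trans (reachN_le_reach n q₀)
  linarith [valA_le_value (δ := δ) (dist := dist) (T := T) sA q₀]

lemma value_eq_lfpΔ (q : Q) : value δ dist T q = lfpΔ δ dist T q :=
  le_antisymm (value_le_lfpΔ q) (ciSup_le fun n => iterate_Δop_le_value n q)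

end GameValue

section ThreeStateGame

variable {A B O : Type} (ρ : A → B → O) (E : Set O) (α : O → ℝ)
  (hα : ∀ o ∉ E, α o ∈ Set.Icc (0:ℝ) 1)

lemma triδ_zero (a : A) (b : B) :
    triδ ρ E 0 a b = if h : ρ a b ∈ E then Sum.inl 0 else Sum.inr ⟨ρ a b, h⟩ :=
  if_pos rfl

lemma triδ_of_ne_zero {s : Fin 3} (hs : s ≠ 0) (a : A) (b : B) : triδ ρ E s a b = Sum.inl s :=
  if_neg hs

lemma absorbing_triδ : Absorbing (triδ ρ E) (triDist E α hα) 1 := fun a b => by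
  rw [triδ_of_ne_zero ρ E (by decide)]
  funext q
  by_cases hq : q = 1 <;> simp [triDist, dirac, hq]

lemma usesForms_triδ {𝒢 : Set (GameForm A B)} {F : GameForm A B} (hF : F ∈ 𝒢) (E : Set F.O) :
    UsesForms 𝒢 (triδ F.ρ E) := by
  intro s
  refine ⟨F, hF, if s = 0 then fun o => if h : o ∈ E then .inl 0 else .inr ⟨o, h⟩
    else fun _ => .inl s, funext fun a => funext fun b => ?_⟩
  by_cases hs : s = 0
  · simp only [hs, if_true, triδ_zero]
  · simp only [hs, if_false, triδ_of_ne_zero F.ρ E hs]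

variable {ρ E α}

lemma locPay_triδ_zero {ψ : Fin 3 → ℝ} (h₁ : ψ 1 = 1) (h₂ : ψ 2 = 0) :
    locPay (triδ ρ E) (triDist E α hα) ψ 0 = fun a b => extendVal E α (ψ 0) (ρ a b) := by
  funext a b
  simp only [locPay, triδ_zero, extendVal]
  split_ifs with h
  · exact FDist.sum_dirac_mul 0 ψ
  · simp [lift, triDist, Fin.sum_univ_three, h₁, h₂]

lemma locPay_triδ_of_ne_zero (ψ : Fin 3 → ℝ) {s : Fin 3} (hs : s ≠ 0) :
    locPay (triδ ρ E) (triDist E α hα) ψ s = fun _ _ => ψ s := by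
  funext a b
  simp only [locPay, triδ_of_ne_zero ρ E hs]
  exact FDist.sum_dirac_mul s ψ

variable [Fintype A] [Fintype B] [Nonempty A] [Nonempty B]

lemma lfpΔ_triδ_zero {v : ℝ} (hv : IsLfpVal ρ E α v) :
    lfpΔ (triδ ρ E) (triDist E α hα) 1 0 = v := by
  set m := lfpΔ (triδ ρ E) (triDist E α hα) 1
  have hle : m ≤ ![v, 1, 0] := by
    refine lfpΔ_le_of_Δop_le (fun s => by fin_cases s <;> simp [hv.1.1]) fun s => ?_
    rw [Δop_eq_bellmanOp]
    fin_cases s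
    · simp only [bellmanOp, Fin.zero_eta, Fin.isValue, zero_ne_one, if_false]
      rw [locPay_triδ_zero hα (ψ := ![v, 1, 0]) rfl rfl]
      exact hv.2.1.le
    · simp [bellmanOp]
    · simp [bellmanOp, locPay_triδ_of_ne_zero hα _ (show (2 : Fin 3) ≠ 0 by decide),
        isLocalValue_valGF.const]
  have h₂ : m 2 = 0 := le_antisymm (hle 2) (lfpΔ_nonneg 2)
  have hfix : fval ρ E α (m 0) = m 0 := by
    rw [fval, ← locPay_triδ_zero hα lfpΔ_target h₂]
    exact valGF_lfpΔ (by decide)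
  exact le_antisymm (hle 0) (hv.2.2 _ ⟨lfpΔ_nonneg 0, lfpΔ_le_one 0⟩ hfix)

end ThreeStateGame

section Trap

variable {A B O : Type} [Fintype A] [Fintype B]
  {ρ : A → B → O} {E : Set O} {α : O → ℝ} {hα : ∀ o ∉ E, α o ∈ Set.Icc (0:ℝ) 1}
  {v : ℝ} {β : FDist A → B} {sA : Strat (Fin 3) A}

def respond {Q : Type} (β : FDist A → B) (sA : Strat Q A) : Strat Q B :=
  fun h q => dirac (β (sA h q))

local notation "C" => reachSetNAux (triδ ρ E) (triDist E α hα) {1}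

lemma reachSetNAux_triδ_succ_of_trap {h : List (Fin 3)}
    (htrap : ∀ a ∈ supp (sA h 0), ρ a (β (sA h 0)) ∈ E) (n : ℕ) :
    C (n + 1) sA (respond β sA) h 0 = C n sA (respond β sA) (h ++ [0]) 0 := by
  simp only [reachSetNAux, Set.mem_singleton_iff, Fin.zero_eq_one_iff]
  rw [respond, sum_step_dirac_mul]
  refine (sA h 0).sum_mul_eq fun a ha => ?_
  simp only [locPay, triδ_zero, dif_pos (htrap a ha)]
  exact FDist.sum_dirac_mul 0 _

lemma reachSetNAux_triδ_add {u : A → B → ℝ} (htrap : ∀ σ ∈ OptA u, ∀ a ∈ supp σ, ρ a (β σ) ∈ E)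
    {k : ℕ} (hk : ∀ j < k, sA (List.replicate j 0) 0 ∈ OptA u) (n : ℕ) :
    C (k + n) sA (respond β sA) [] 0 = C n sA (respond β sA) (List.replicate k 0) 0 := by
  induction k generalizing n with
  | zero => rw [Nat.zero_add]; rfl
  | succ k ih =>
    rw [show k + 1 + n = k + (n + 1) by omega, ih (fun j hj => hk j (by omega)),
      reachSetNAux_triδ_succ_of_trap (htrap _ (hk k k.lt_succ_self)), ← List.replicate_succ']

lemma reachN_triδ_eq_zero {u : A → B → ℝ} (htrap : ∀ σ ∈ OptA u, ∀ a ∈ supp σ, ρ a (β σ) ∈ E)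
    {n : ℕ} (hn : ∀ j < n, sA (List.replicate j 0) 0 ∈ OptA u) :
    reachN (triδ ρ E) (triDist E α hα) 1 n sA (respond β sA) 0 = 0 := by
  rw [reachN, reachSetN, ← Nat.add_zero n, reachSetNAux_triδ_add htrap hn 0]
  simp [reachSetNAux]

variable [Nonempty B]

lemma reachSetNAux_triδ_le (hv : IsLfpVal ρ E α v)
    (hβ : ∀ σ, β σ ∈ optActs (fun a b => extendVal E α v (ρ a b)) σ) (n : ℕ) (h : List (Fin 3))
    (q : Fin 3) : C n sA (respond β sA) h q ≤ ![v, 1, 0] q := by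
  refine reachSetNAux_le_of_superharmonic (fun s => by fin_cases s <;> simp [hv.1.1]) (by simp)
    (fun h q hq => ?_) n h q
  obtain rfl | rfl | rfl : q = 0 ∨ q = 1 ∨ q = 2 := by omega
  · rw [locPay_triδ_zero hα (ψ := ![v, 1, 0]) rfl rfl]
    have hb : outB _ (sA h 0) (β (sA h 0)) = _ := hβ (sA h 0)
    rw [respond, out_dirac]
    exact hb.le.trans ((valStratGF_le_valGF _ _).trans hv.2.1.le)
  · exact absurd rfl hq
  · rw [locPay_triδ_of_ne_zero hα _ (by decide), out_const]

lemma reachSetNAux_triδ_succ_le (hv : IsLfpVal ρ E α v)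
    (hβ : ∀ σ, β σ ∈ optActs (fun a b => extendVal E α v (ρ a b)) σ) (n : ℕ) (h : List (Fin 3)) :
    C (n + 1) sA (respond β sA) h 0 ≤ valStratGF (fun a b => extendVal E α v (ρ a b)) (sA h 0) := by
  simp only [reachSetNAux, Set.mem_singleton_iff, Fin.zero_eq_one_iff]
  calc _ ≤ ∑ q, step (triδ ρ E) (triDist E α hα) (sA h 0) (respond β sA h 0) 0 q * ![v, 1, 0] q :=
        (stepDist _ _ _ _ 0).sum_mul_mono fun q => reachSetNAux_triδ_le hv hβ n _ q
    _ = _ := by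
        rw [respond, sum_step_dirac_mul, locPay_triδ_zero hα (ψ := ![v, 1, 0]) rfl rfl]
        exact hβ _

lemma reach_triδ_lt (hv : IsLfpVal ρ E α v) (hv₀ : v ≠ 0)
    (hβ : ∀ σ, β σ ∈ optActs (fun a b => extendVal E α v (ρ a b)) σ)
    (htrap : ∀ σ ∈ OptA (fun a b => extendVal E α v (ρ a b)), ∀ a ∈ supp σ, ρ a (β σ) ∈ E) :
    reach (triδ ρ E) (triDist E α hα) 1 sA (respond β sA) 0 < v := by
  set u := fun a b => extendVal E α v (ρ a b)
  have hvpos : 0 < v := lt_of_le_of_ne hv.1.1 (Ne.symm hv₀)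
  by_cases hall : ∀ k, sA (List.replicate k 0) 0 ∈ OptA u
  · refine lt_of_le_of_lt (ciSup_le fun n => ?_) hvpos
    exact (reachN_triδ_eq_zero htrap fun j _ => hall j).le
  push Not at hall
  set k₀ := Nat.find hall
  set w := valStratGF u (sA (List.replicate k₀ 0) 0)
  have hw : w < v := lt_of_le_of_ne ((valStratGF_le_valGF _ _).trans hv.2.1.le)
    fun h => Nat.find_spec hall (h.trans hv.2.1.symm)
  have hw₀ : 0 ≤ w := (isLocalValue_valStratGF _).ge_of_ge fun a b => by
    unfold u extendVal
    split_ifs with h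
    exacts [hv.1.1, (hα _ h).1]
  refine lt_of_le_of_lt (ciSup_le fun n => ?_) hw
  have hopt : ∀ j < k₀, sA (List.replicate j 0) 0 ∈ OptA u := fun j hj =>
    not_not.1 (Nat.find_min hall hj)
  rcases le_or_gt n k₀ with hn | hn
  · rw [reachN_triδ_eq_zero htrap fun j hj => hopt j (by omega)]
    exact hw₀
  · obtain ⟨m, rfl⟩ := Nat.exists_eq_add_of_lt hn
    show C (k₀ + (m + 1)) _ _ _ _ ≤ w
    rw [reachSetNAux_triδ_add htrap hopt]
    exact reachSetNAux_triδ_succ_le hv hβ m _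

end Trap

theorem rmwrt_of_maximizable {A B O : Type} [Fintype A] [Fintype B] [Nonempty A] [Nonempty B]
    (ρ : A → B → O) (E : Set O) (α : O → ℝ) (hα : ∀ o ∉ E, α o ∈ Set.Icc (0:ℝ) 1)
    (hmax : Maximizable (triδ ρ E) (triDist E α hα) 1 0) : RMwrt ρ E α := by
  intro v hv
  by_contra hRM
  push Not at hRM
  obtain ⟨hv₀, hRM⟩ := hRM
  set u := fun a b => extendVal E α v (ρ a b)
  have hresp : ∀ σ : FDist A, ∃ b ∈ optActs u σ, σ ∈ OptA u → ∀ a ∈ supp σ, ρ a b ∈ E := by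
    intro σ
    by_cases hσ : σ ∈ OptA u
    · obtain ⟨b, hb, htrap⟩ := hRM σ hσ
      exact ⟨b, hb, fun _ => htrap⟩
    · obtain ⟨b, hb⟩ := exists_mem_optActs u σ
      exact ⟨b, hb, fun h => absurd h hσ⟩
  choose β hβ htrap using hresp
  obtain ⟨sA, hsA⟩ := hmax
  have hle := valA_le_reach (δ := triδ ρ E) (dist := triDist E α hα) (T := 1) sA (respond β sA) 0
  rw [hsA, value_eq_lfpΔ, lfpΔ_triδ_zero hα hv] at hle
  exact (reach_triδ_lt hv hv₀ hβ htrap).not_ge hle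

section Backward

variable {A B Q D : Type} [Fintype A] [Fintype B] [Fintype Q]
  {δ : Q → A → B → D} {dist : D → FDist Q} {T : Q}

lemma mem_compl_natS_compl {W : Set Q} {d : D} :
    d ∈ (natS dist Wᶜ)ᶜ ↔ ∀ q, (dist d).1 q ≠ 0 → q ∈ W := by
  simp only [natS, Set.mem_compl_iff, Set.mem_ofPred_eq, not_exists, not_and]
  exact forall_congr' fun q => by tauto

lemma extendVal_lift_lfpΔ {W : Set Q} {c : ℝ} (hW : ∀ q ∈ W, lfpΔ δ dist T q = c) (q : Q) :
    (fun a b => extendVal (natS dist Wᶜ)ᶜ (lift dist (lfpΔ δ dist T)) c (δ q a b)) =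
      locPay δ dist (lfpΔ δ dist T) q := by
  funext a b
  unfold extendVal
  split_ifs with hd
  · exact (lift_eq_of_forall dist fun q' hq' => hW q' (mem_compl_natS_compl.1 hd q' hq')).symm
  · rfl

lemma SecN_mono (m : Q → ℝ) (Bd : Set Q) : Monotone (SecN δ dist m T Bd) :=
  monotone_nat_of_le_succ fun _ => Set.subset_union_left

lemma mem_iUnion_SecN_of_forall_optActs {m : Q → ℝ} {q : Q} {σ : FDist A}
    (hσ : σ ∈ OptA (locPay δ dist m q))
    (hprog : ∀ b ∈ optActs (locPay δ dist m q) σ,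
      ∃ a ∈ supp σ, δ q a b ∈ natS dist (⋃ n, SecN δ dist m T ∅ n)) :
    q ∈ ⋃ n, SecN δ dist m T ∅ n := by
  have hlevel : ∀ b, ∃ n, b ∈ optActs (locPay δ dist m q) σ →
      ∃ a ∈ supp σ, δ q a b ∈ natS dist (SecN δ dist m T ∅ n) := fun b => by
    by_cases hb : b ∈ optActs (locPay δ dist m q) σ
    · obtain ⟨a, ha, q', hq', hd⟩ := hprog b hb
      obtain ⟨n, hn⟩ := Set.mem_iUnion.1 hq'
      exact ⟨n, fun _ => ⟨a, ha, q', hn, hd⟩⟩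
    · exact ⟨0, fun h => absurd h hb⟩
  choose n hn using hlevel
  refine Set.mem_iUnion.2 ⟨univ.sup n + 1, Or.inr ⟨Set.notMem_empty q, σ, ⟨hσ, fun b hb => ?_⟩, ?_⟩⟩
  · obtain ⟨a, ha, q', hq', hd⟩ := hn b hb
    exact ⟨a, ha, q', SecN_mono m ∅ (le_sup (mem_univ b)) hq', hd⟩
  · rintro ⟨-, -, -, -, -, q', hq', -⟩
    exact hq'

variable [Nonempty A] [Nonempty B]

/-- Lowering `lfpΔ` to `min y lfpΔ` on `W` gives a pre-fixed point of `Δop`. -/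
lemma lfpΔ_le_of_fval_le {W : Set Q} (hT : T ∉ W) {y : ℝ} (hy₀ : 0 ≤ y)
    (hy : ∀ q ∈ W, fval (δ q) (natS dist Wᶜ)ᶜ (lift dist (lfpΔ δ dist T)) y ≤ y) {q : Q}
    (hq : q ∈ W) : lfpΔ δ dist T q ≤ y := by
  set m := lfpΔ δ dist T
  set m' := fun q => if q ∈ W then min y (m q) else m q
  have hm' : m' ≤ m := fun q => by simp only [m']; split_ifs <;> simp
  have hpre : Δop δ dist T m' ≤ m' := fun q => by
    have hΔ : Δop δ dist T m' q ≤ m q := (Δop_mono hm' q).trans_eq (congrFun Δop_lfpΔ q)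
    simp only [m']
    split_ifs with hqW
    · refine le_min ?_ hΔ
      refine le_trans ?_ (hy q hqW)
      rw [Δop, if_neg (ne_of_mem_of_not_mem hqW hT)]
      refine valGF_mono fun a b => ?_
      unfold extendVal
      split_ifs with hd
      · refine (dist _).sum_mul_le fun q' hq' => ?_
        simp [mem_compl_natS_compl.1 hd q' hq']
      · exact lift_mono dist hm' _
    · exact hΔ
  have := lfpΔ_le_of_Δop_le (fun q => by
    simp only [m']; split_ifs
    exacts [le_min hy₀ (lfpΔ_nonneg q), lfpΔ_nonneg q]) hpre q
  simp only [m', if_pos hq] at this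
  exact this.trans (min_le_left _ _)

lemma exists_isLfpVal_of_lfpΔ_eq {W : Set Q} (hW : W.Nonempty) (hT : T ∉ W) {c : ℝ}
    (hc : ∀ q ∈ W, lfpΔ δ dist T q = c) :
    ∃ q ∈ W, IsLfpVal (δ q) (natS dist Wᶜ)ᶜ (lift dist (lfpΔ δ dist T)) c := by
  obtain ⟨q₁, hq₁⟩ := hW
  have hc01 : c ∈ Set.Icc (0:ℝ) 1 := hc q₁ hq₁ ▸ ⟨lfpΔ_nonneg q₁, lfpΔ_le_one q₁⟩
  have hfix : ∀ q ∈ W, fval (δ q) (natS dist Wᶜ)ᶜ (lift dist (lfpΔ δ dist T)) c = c :=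
    fun q hq => by
      rw [fval, extendVal_lift_lfpΔ hc, valGF_lfpΔ (ne_of_mem_of_not_mem hq hT), hc q hq]
  by_contra hnot
  have hlow : ∀ q, ∃ y, q ∈ W → y ∈ Set.Icc (0:ℝ) 1 ∧
      fval (δ q) (natS dist Wᶜ)ᶜ (lift dist (lfpΔ δ dist T)) y = y ∧ y < c := fun q => by
    by_cases hq : q ∈ W
    · have hq' : ¬IsLfpVal _ _ _ c := fun h => hnot ⟨q, hq, h⟩
      simp only [IsLfpVal, hc01, hfix q hq, true_and, not_forall, not_le, exists_prop] at hq'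
      obtain ⟨y, hy, hfy, hyc⟩ := hq'
      exact ⟨y, fun _ => ⟨hy, hfy, hyc⟩⟩
    · exact ⟨0, fun h => absurd h hq⟩
  choose y hy using hlow
  obtain ⟨q₂, hq₂, hmax⟩ := exists_max_image (univ.filter (· ∈ W)) y ⟨q₁, by simpa using hq₁⟩
  have hq₂W : q₂ ∈ W := by simpa using hq₂
  have hle := lfpΔ_le_of_fval_le hT (hy q₂ hq₂W).1.1 (fun q hq => by
    have hyq := hmax q (by simpa using hq)
    linarith [fval_le_add (δ q) (natS dist Wᶜ)ᶜ (lift dist (lfpΔ δ dist T)) hyq,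
      (hy q hq).2.1]) hq₁
  linarith [hc q₁ hq₁, (hy q₂ hq₂W).2.2]

/-- Non-secure successors have value at most `c`, while an optimal answer averages to exactly
`c`: if no successor is secure, all of them are non-secure of value `c`. -/
lemma escape_or_stay {c : ℝ}
    (hc : ∀ q ∉ ⋃ n, SecN δ dist (lfpΔ δ dist T) T ∅ n, lfpΔ δ dist T q ≤ c)
    {q : Q} (hqT : q ≠ T) (hq : lfpΔ δ dist T q = c) {σ : FDist A}
    (hσ : σ ∈ OptA (locPay δ dist (lfpΔ δ dist T) q)) {b : B}
    (hb : b ∈ optActs (locPay δ dist (lfpΔ δ dist T) q) σ) :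
    (∃ a ∈ supp σ, δ q a b ∈ natS dist (⋃ n, SecN δ dist (lfpΔ δ dist T) T ∅ n)) ∨
      ∀ a ∈ supp σ, δ q a b ∈ (natS dist
        {q | q ∉ ⋃ n, SecN δ dist (lfpΔ δ dist T) T ∅ n ∧ lfpΔ δ dist T q = c}ᶜ)ᶜ := by
  set m := lfpΔ δ dist T
  set G := ⋃ n, SecN δ dist m T ∅ n
  refine or_iff_not_imp_left.2 fun hno a ha => mem_compl_natS_compl.2 fun q' hq' => ?_
  have hstep : step δ dist σ (dirac b) q q' ≠ 0 :=
    (step_dirac_ne_zero_iff δ dist σ b q q').2 ⟨a, ha, hq'⟩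
  have hG : ∀ q', step δ dist σ (dirac b) q q' ≠ 0 → q' ∉ G := fun q' h hq'G => by
    obtain ⟨a', ha', hd⟩ := (step_dirac_ne_zero_iff δ dist σ b q q').1 h
    exact hno ⟨a', ha', q', hq'G, hd⟩
  have hsum : c ≤ ∑ q', step δ dist σ (dirac b) q q' * m q' := by
    have hbσ : outB (locPay δ dist m q) σ b = valStratGF (locPay δ dist m q) σ := hb
    have hσv : valStratGF (locPay δ dist m q) σ = valGF (locPay δ dist m q) := hσ
    rw [sum_step_dirac_mul, hbσ, hσv, valGF_lfpΔ hqT]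
    exact hq.ge
  exact ⟨hG q' hstep, (stepDist δ dist σ (dirac b) q).eq_of_le_sum_mul
    (fun q'' h => hc q'' (hG q'' h)) hsum hstep⟩

lemma mem_iUnion_SecN_of_lfpΔ_pos
    (hRM : ∀ (q : Q) (E : Set D) (α : D → ℝ), (∀ d ∉ E, α d ∈ Set.Icc (0:ℝ) 1) → RMwrt (δ q) E α)
    {q₀ : Q} (hq₀ : 0 < lfpΔ δ dist T q₀) : q₀ ∈ ⋃ n, SecN δ dist (lfpΔ δ dist T) T ∅ n := by
  set m := lfpΔ δ dist T
  set G := ⋃ n, SecN δ dist m T ∅ n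
  by_contra hq₀G
  obtain ⟨q₁, hq₁, hmax⟩ := exists_max_image (univ.filter (· ∉ G)) m ⟨q₀, by simpa using hq₀G⟩
  set c := m q₁
  have hc : ∀ q ∉ G, m q ≤ c := fun q hq => hmax q (by simpa using hq)
  set W := {q | q ∉ G ∧ m q = c}
  have hTW : T ∉ W := fun h => h.1 (Set.mem_iUnion.2 ⟨0, rfl⟩)
  obtain ⟨q, hqW, hlfp⟩ :=
    exists_isLfpVal_of_lfpΔ_eq (W := W) ⟨q₁, by simpa using hq₁, rfl⟩ hTW fun q hq => hq.2
  have hα : ∀ d ∉ (natS dist Wᶜ)ᶜ, lift dist m d ∈ Set.Icc (0:ℝ) 1 := fun d _ =>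
    ⟨(dist d).le_sum_mul lfpΔ_nonneg, (dist d).sum_mul_le fun q _ => lfpΔ_le_one q⟩
  rcases hRM q _ _ hα c hlfp with hc0 | ⟨σ, hσ, hesc⟩
  · linarith [hc q₀ hq₀G]
  rw [extendVal_lift_lfpΔ fun q hq => hq.2] at hσ hesc
  refine hqW.1 (mem_iUnion_SecN_of_forall_optActs hσ fun b hb => ?_)
  obtain ⟨a, ha, hout⟩ := hesc b hb
  exact (escape_or_stay hc (ne_of_mem_of_not_mem hqW hTW) hqW.2 hσ hb).resolve_right
    fun hstay => hout (hstay a ha)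

end Backward

section Positional

variable {A B Q D : Type} [Fintype A] [Fintype B] [Fintype Q]
  {δ : Q → A → B → D} {dist : D → FDist Q} {T : Q}

def secRank (δ : Q → A → B → D) (dist : D → FDist Q) (m : Q → ℝ) (T q : Q) : ℕ :=
  sInf {k | q ∈ SecN δ dist m T ∅ (k + 1)}

lemma secRank_lt {m : Q → ℝ} {k : ℕ} {q : Q} (hq : q ∈ SecN δ dist m T ∅ k) (hqT : q ≠ T) :
    secRank δ dist m T q < k := by
  obtain _ | k := k
  · exact absurd hq hqT
  · exact Nat.lt_succ_of_le (Nat.sInf_le hq)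

lemma nonempty_Eff_secRank {m : Q → ℝ} {q : Q} (hq : q ∈ ⋃ n, SecN δ dist m T ∅ n)
    (hqT : q ≠ T) : (Eff δ dist m q (SecN δ dist m T ∅ (secRank δ dist m T q)) ∅).Nonempty := by
  obtain ⟨n, hn⟩ := Set.mem_iUnion.1 hq
  obtain _ | n := n
  · exact absurd hn hqT
  have hmem := Nat.sInf_mem (s := {k | q ∈ SecN δ dist m T ∅ (k + 1)}) ⟨n, hn⟩
  rcases hmem with hlow | ⟨-, hEff⟩
  · exact absurd (secRank_lt hlow hqT) (lt_irrefl _)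
  · exact hEff

variable [Nonempty B]

/-- The value of the Markov decision process for Player B induced by the positional strategy
`σs` of Player A. -/
def valuePos (δ : Q → A → B → D) (dist : D → FDist Q) (T : Q) (σs : Q → FDist A) : Q → ℝ :=
  valueIter δ dist T fun q u => valStratGF u (σs q)

lemma valuePos_le_reach (σs : Q → FDist A) (sB : Strat Q B) (q : Q) :
    valuePos δ dist T σs q ≤ reach δ dist T (ofPos σs) sB q := by
  have hΦ := isValueIteration_bellmanOp δ dist T fun q => isLocalValue_valStratGF (σs q)
  refine ciSup_le fun n => (le_reachSetNAux_of_subharmonic (n := n) (hΦ.iterate_le_one · ·)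
    (fun q hq => ?_) (fun k h q _ hq => ?_) n [] q (by simp)).trans (reachN_le_reach n q)
  · simp [reachIndicator, hq]
  · rw [Function.iterate_succ_apply', bellmanOp, if_neg hq]
    exact valStratGF_le_out _ _ _

lemma exists_optActs_of_max_gap {m V : Q → ℝ} {ζ : ℝ} (hζ : ∀ q, m q - V q ≤ ζ) {q : Q}
    (hq : m q - V q = ζ) {σ : FDist A} (hσm : valStratGF (locPay δ dist m q) σ = m q)
    (hσV : valStratGF (locPay δ dist V q) σ = V q) :
    ∃ b ∈ optActs (locPay δ dist m q) σ,
      ∀ q', step δ dist σ (dirac b) q q' ≠ 0 → m q' - V q' = ζ := by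
  obtain ⟨b, hb⟩ := exists_mem_optActs (locPay δ dist V q) σ
  set P := stepDist δ dist σ (dirac b) q
  have hV : ∑ q', P.1 q' * V q' = V q := (sum_step_dirac_mul δ dist σ b q V).trans (hb.trans hσV)
  have hm : m q ≤ ∑ q', P.1 q' * m q' :=
    hσm.ge.trans ((valStratGF_le_outB _ _ b).trans_eq (sum_step_dirac_mul δ dist σ b q m).symm)
  have hsplit : ∑ q', P.1 q' * (m q' - V q') = ∑ q', P.1 q' * m q' - ∑ q', P.1 q' * V q' := by
    simp only [mul_sub, sum_sub_distrib]
  have hgap : ζ ≤ ∑ q', P.1 q' * (m q' - V q') := by linarith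
  have hle : ∑ q', P.1 q' * (m q' - V q') ≤ ζ := P.sum_mul_le fun q' _ => hζ q'
  refine ⟨b, ?_, fun q' h => P.eq_of_le_sum_mul (f := fun q' => m q' - V q') (fun q' _ => hζ q')
    hgap h⟩
  show outB _ σ b = _
  rw [hσm, ← sum_step_dirac_mul]
  exact le_antisymm (show ∑ q', P.1 q' * m q' ≤ m q by linarith) hm

lemma le_valuePos {m : Q → ℝ} (hm : ∀ q, q ≠ T → valGF (locPay δ dist m q) = m q) (hmT : m T = 1)
    {σs : Q → FDist A} {S : ℕ → Set Q} {r : Q → ℕ}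
    (hσs : ∀ q, 0 < m q → q ≠ T → σs q ∈ Prog δ dist m q (S (r q)))
    (hr : ∀ k q, q ∈ S k → q ≠ T → r q < k) : m ≤ valuePos δ dist T σs := by
  have hL := fun q => isLocalValue_valStratGF (B := B) (σs q)
  set V := valuePos δ dist T σs
  by_contra hneg
  obtain ⟨q₀, hq₀⟩ : ∃ q, V q < m q := by simpa [Pi.le_def] using hneg
  obtain ⟨qz, -, hζ⟩ := exists_max_image univ (fun q => m q - V q) ⟨q₀, mem_univ _⟩
  set ζ := m qz - V qz
  have hζ₀ : 0 < ζ := by linarith [hζ q₀ (mem_univ _)]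
  obtain ⟨q, hq, hmin⟩ := exists_min_image (univ.filter fun q => m q - V q = ζ) r
    ⟨qz, by simp [ζ]⟩
  have hqζ : m q - V q = ζ := by simpa using hq
  have hV₀ : ∀ q, 0 ≤ V q := valueIter_nonneg hL
  have hVT : V T = 1 := valueIter_target hL
  have hgap_T : ∀ q, m q - V q = ζ → q ≠ T := fun q h hqT => by
    rw [hqT, hmT, hVT] at h
    linarith
  have hqT := hgap_T q hqζ
  have hmq : 0 < m q := by linarith [hV₀ q]
  obtain ⟨hopt, hprog⟩ := hσs q hmq hqT
  obtain ⟨b, hb, hsucc⟩ := exists_optActs_of_max_gap (fun q => hζ q (mem_univ q)) hqζ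
    ((hopt : _ = _).trans (hm q hqT)) (valueIter_fixed hL hqT)
  obtain ⟨a, ha, q', hq'S, hq'⟩ := hprog b hb
  have hstep := (step_dirac_ne_zero_iff δ dist _ b q q').2 ⟨a, ha, hq'⟩
  have hq'ζ := hsucc q' hstep
  exact absurd (hmin q' (by simpa using hq'ζ)) (not_le.2 (hr _ q' hq'S (hgap_T q' hq'ζ)))

theorem maximizable_of_rmwrt [Nonempty A]
    (hRM : ∀ (q : Q) (E : Set D) (α : D → ℝ), (∀ d ∉ E, α d ∈ Set.Icc (0:ℝ) 1) → RMwrt (δ q) E α)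
    (q : Q) : Maximizable δ dist T q := by
  set m := lfpΔ δ dist T
  have hprog : ∀ q, ∃ σ : FDist A, 0 < m q → q ≠ T →
      σ ∈ Prog δ dist m q (SecN δ dist m T ∅ (secRank δ dist m T q)) := fun q => by
    by_cases h : 0 < m q ∧ q ≠ T
    · obtain ⟨σ, hσ⟩ := nonempty_Eff_secRank (mem_iUnion_SecN_of_lfpΔ_pos hRM h.1) h.2
      exact ⟨σ, fun _ _ => hσ.1⟩
    · exact ⟨Classical.arbitrary _, fun h₁ h₂ => absurd ⟨h₁, h₂⟩ h⟩
  choose σs hσs using hprog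
  have hle := le_valuePos (fun q hq => valGF_lfpΔ hq) lfpΔ_target hσs fun _ _ => secRank_lt
  refine ⟨ofPos σs, le_antisymm (valA_le_value _ q) ?_⟩
  rw [value_eq_lfpΔ]
  exact le_valA fun sB => (hle q).trans (valuePos_le_reach σs sB q)

end Positional

end CRG

/-- all states of all finite concurrent reachability games with local
interactions in `𝒢` are maximizable iff every game form of `𝒢` is reach-maximizable. -/
theorem stmt10
    {A B : Type} [Fintype A] [Fintype B] [Nonempty A] [Nonempty B]
    (𝒢 : Set (CRG.GameForm A B)) :
    (∀ (Q D : Type) [Fintype Q] [Fintype D] [Nonempty Q] [Nonempty D] [DecidableEq Q]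
        (δ : Q → A → B → D) (dist : D → FDist Q) (T : Q),
        CRG.Absorbing δ dist T → CRG.UsesForms 𝒢 δ →
          ∀ q : Q, CRG.Maximizable δ dist T q) ↔
      ∀ F ∈ 𝒢, CRG.RMform F.ρ := by
  refine ⟨fun hmax F hF E α hα => ?_, fun hRM Q D _ _ _ _ _ δ dist T _ huses q => ?_⟩
  · let _ : Fintype F.O := F.fin
    exact CRG.rmwrt_of_maximizable F.ρ E α hα (hmax _ _ _ _ _ (CRG.absorbing_triδ F.ρ E α hα)
      (CRG.usesForms_triδ hF E) 0)
  · refine CRG.maximizable_of_rmwrt (fun q E α hα => ?_) q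
    obtain ⟨F, hF, g, hg⟩ := huses q
    rw [hg]
    -- RM of `g ∘ F.ρ` w.r.t. `(E, α)` is, definitionally, RM of `F.ρ` w.r.t. `(g ⁻¹' E, α ∘ g)`.
    exact hRM F hF (g ⁻¹' E) (α ∘ g) fun o ho => hα (g o) ho
end
end

section
/- Let n ≥ 1 and let f : [0,1]^n → [0,1]^n be monotone with respect to the componentwise order and 1-Lipschitz with respect to the supremum norm. Suppose the least fixed point m of f satisfies m(i) > 0 for every i ∈ {1,…,n}. Then for every ε > 0 there exists v ∈ [0,1]^n with v ⪯ m, ‖m − v‖_∞ ≤ ε, and f(v)(i) > v(i) for every i ∈ {1,…,n}. -/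
open scoped BigOperators Classical

noncomputable section

/-!
Perturb `f` downwards: for `t > 0` let `g_t v = max (f v - t) 0` coordinatewise (`shiftDown f t`),
and let `p t` be the least fixed point of `g_t` in the box (`shiftedLfp f t`, Knaster–Tarski).
Since `m` is a pre-fixed point of every `g_t`, `p t ≤ m`, and `p t` increases as `t ↓ 0`. Its
limit is a fixed point of `f` by continuity, hence equals `m` by leastness. For small `t` the point
`p t` is close to `m`, so positive, and a positive coordinate of a fixed point of `g_t` satisfies
`p t i = f (p t) i - t < f (p t) i`.
-/

open Set Filter Topology

section KnasterTarski

variable {α : Type*} [ConditionallyCompleteLattice α] {g : α → α} {a b v : α}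

def lfpIcc (g : α → α) (a b : α) : α := sInf {v ∈ Icc a b | g v ≤ v}

theorem lfpIcc_le (hv : v ∈ Icc a b) (hgv : g v ≤ v) : lfpIcc g a b ≤ v :=
  csInf_le ⟨a, fun _ hw => hw.1.1⟩ ⟨hv, hgv⟩

theorem prefixed_Icc_nonempty (hab : a ≤ b) (hg : MapsTo g (Icc a b) (Icc a b)) :
    {v ∈ Icc a b | g v ≤ v}.Nonempty :=
  ⟨b, right_mem_Icc.2 hab, (hg (right_mem_Icc.2 hab)).2⟩

theorem lfpIcc_mem (hab : a ≤ b) (hg : MapsTo g (Icc a b) (Icc a b)) : lfpIcc g a b ∈ Icc a b :=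
  ⟨le_csInf (prefixed_Icc_nonempty hab hg) fun _ hw => hw.1.1,
    lfpIcc_le (right_mem_Icc.2 hab) (hg (right_mem_Icc.2 hab)).2⟩

theorem map_lfpIcc (hab : a ≤ b) (hg : MapsTo g (Icc a b) (Icc a b))
    (hmono : MonotoneOn g (Icc a b)) : g (lfpIcc g a b) = lfpIcc g a b := by
  have hp := lfpIcc_mem hab hg
  have hgp : g (lfpIcc g a b) ≤ lfpIcc g a b :=
    le_csInf (prefixed_Icc_nonempty hab hg) fun v hv =>
      (hmono hp hv.1 (lfpIcc_le hv.1 hv.2)).trans hv.2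
  exact le_antisymm hgp (lfpIcc_le (hg hp) (hmono (hg hp) hp hgp))

end KnasterTarski

section ShiftDown

variable {ι : Type*} {f : (ι → ℝ) → ι → ℝ} {t : ℝ} {v : ι → ℝ}

def shiftDown (f : (ι → ℝ) → ι → ℝ) (t : ℝ) (v : ι → ℝ) : ι → ℝ :=
  fun i => max (f v i - t) 0

theorem shiftDown_mapsTo (hf : MapsTo f (Icc 0 1) (Icc 0 1)) (ht : 0 ≤ t) :
    MapsTo (shiftDown f t) (Icc 0 1) (Icc 0 1) := fun v hv =>
  ⟨fun _ => le_max_right _ _, fun i => max_le (by linarith [(hf hv).2 i]) zero_le_one⟩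

theorem shiftDown_monotoneOn {S : Set (ι → ℝ)} (hf : MonotoneOn f S) :
    MonotoneOn (shiftDown f t) S := fun _ hv _ hw hvw i =>
  max_le_max (sub_le_sub_right (hf hv hw hvw i) t) le_rfl

theorem antitone_shiftDown (v : ι → ℝ) : Antitone fun t => shiftDown f t v :=
  fun _ _ hst _ => max_le_max (by linarith) le_rfl

theorem shiftDown_le_of_apply_le (ht : 0 ≤ t) (hv : 0 ≤ v) (hfv : f v ≤ v) :
    shiftDown f t v ≤ v :=
  fun i => max_le (by linarith [hfv i]) (hv i)

theorem lt_apply_of_shiftDown_eq_self (ht : 0 < t) (hv : shiftDown f t v = v) {i : ι}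
    (hi : 0 < v i) : v i < f v i := by
  by_contra! hle
  have hmax : max (f v i - t) 0 < v i := max_lt (by linarith) hi
  exact hmax.ne (congrFun hv i)

end ShiftDown

section Approximation

variable {ι : Type*} {f : (ι → ℝ) → ι → ℝ} {m : ι → ℝ} {t : ℝ}

def shiftedLfp (f : (ι → ℝ) → ι → ℝ) (t : ℝ) : ι → ℝ :=
  lfpIcc (shiftDown f t) 0 1

theorem shiftedLfp_mem (hf : MapsTo f (Icc 0 1) (Icc 0 1)) (ht : 0 ≤ t) :
    shiftedLfp f t ∈ Icc 0 1 :=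
  lfpIcc_mem zero_le_one (shiftDown_mapsTo hf ht)

theorem shiftDown_shiftedLfp (hf : MapsTo f (Icc 0 1) (Icc 0 1))
    (hmono : MonotoneOn f (Icc 0 1)) (ht : 0 ≤ t) :
    shiftDown f t (shiftedLfp f t) = shiftedLfp f t :=
  map_lfpIcc zero_le_one (shiftDown_mapsTo hf ht) (shiftDown_monotoneOn hmono)

theorem shiftedLfp_le (hm : m ∈ Icc 0 1) (hfix : f m = m) (ht : 0 ≤ t) : shiftedLfp f t ≤ m :=
  lfpIcc_le hm (shiftDown_le_of_apply_le ht hm.1 hfix.le)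

theorem antitoneOn_shiftedLfp (hf : MapsTo f (Icc 0 1) (Icc 0 1))
    (hmono : MonotoneOn f (Icc 0 1)) : AntitoneOn (shiftedLfp f) (Ici 0) := fun _ hs _ _ hst =>
  lfpIcc_le (shiftedLfp_mem hf hs)
    ((antitone_shiftDown _ hst).trans (shiftDown_shiftedLfp hf hmono hs).le)

theorem tendsto_shiftedLfp (hf : MapsTo f (Icc 0 1) (Icc 0 1))
    (hmono : MonotoneOn f (Icc 0 1)) (hcont : ContinuousOn f (Icc 0 1)) (hm : m ∈ Icc 0 1)
    (hfix : f m = m) (hleast : ∀ v ∈ Icc 0 1, f v = v → m ≤ v) :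
    Tendsto (shiftedLfp f) (𝓝[>] 0) (𝓝 m) := by
  have hp_mem : ∀ t ∈ Ioi (0 : ℝ), shiftedLfp f t ∈ Icc 0 m := fun t ht =>
    ⟨(shiftedLfp_mem hf (le_of_lt ht)).1, shiftedLfp_le hm hfix (le_of_lt ht)⟩
  have hbox : Icc 0 m ⊆ Icc (0 : ι → ℝ) 1 := Icc_subset_Icc_right hm.2
  obtain ⟨L, hL⟩ : ∃ L, Tendsto (shiftedLfp f) (𝓝[>] 0) (𝓝 L) := by
    have hanti := (antitoneOn_shiftedLfp hf hmono).mono Ioi_subset_Ici_self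
    refine ⟨_, tendsto_pi_nhds.2 fun i => AntitoneOn.tendsto_nhdsGT
      (fun s hs t ht hst => hanti hs ht hst i) ⟨m i, ?_⟩⟩
    rintro _ ⟨t, ht, rfl⟩
    exact (hp_mem t ht).2 i
  have hp_ev : ∀ᶠ t in 𝓝[>] (0 : ℝ), shiftedLfp f t ∈ Icc 0 m :=
    eventually_mem_nhdsWithin.mono hp_mem
  have hL_mem : L ∈ Icc 0 m := isClosed_Icc.mem_of_tendsto hL hp_ev
  have hfp : Tendsto (fun t => f (shiftedLfp f t)) (𝓝[>] 0) (𝓝 (f L)) :=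
    (hcont L (hbox hL_mem)).tendsto.comp
      (tendsto_nhdsWithin_iff.2 ⟨hL, hp_ev.mono fun _ ht => hbox ht⟩)
  have hshift : Tendsto (fun t => shiftDown f t (shiftedLfp f t)) (𝓝[>] 0)
      (𝓝 (shiftDown f 0 L)) :=
    tendsto_pi_nhds.2 fun i =>
      ((tendsto_pi_nhds.1 hfp i).sub nhdsWithin_le_nhds).max tendsto_const_nhds
  have hL_fix : f L = L := by
    have h0 : shiftDown f 0 L = f L := funext fun i => by
      simp only [shiftDown, sub_zero]
      exact max_eq_left ((hf (hbox hL_mem)).1 i)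
    rw [← h0]
    refine tendsto_nhds_unique (hshift.congr' ?_) hL
    exact eventually_mem_nhdsWithin.mono fun t ht => shiftDown_shiftedLfp hf hmono (le_of_lt ht)
  rwa [le_antisymm hL_mem.2 (hleast L (hbox hL_mem) hL_fix)] at hL

end Approximation

section Coordinates

variable {ι : Type*} {S : Set (ι → ℝ)} {f : (ι → ℝ) → ι → ℝ}

theorem mem_Icc_pi_iff {a b v : ι → ℝ} : v ∈ Icc a b ↔ ∀ i, v i ∈ Icc (a i) (b i) := by
  simp only [mem_Icc, Pi.le_def, forall_and]

theorem lipschitzOnWith_one_of_forall_abs_sub_le [Fintype ι]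
    (h : ∀ v ∈ S, ∀ w ∈ S, ∀ C : ℝ, (∀ i, |v i - w i| ≤ C) →
      ∀ i, |f v i - f w i| ≤ C) :
    LipschitzOnWith 1 f S :=
  LipschitzOnWith.of_dist_le_mul fun v hv w hw => by
    rw [NNReal.coe_one, one_mul]
    refine (dist_pi_le_iff dist_nonneg).2 fun i => ?_
    rw [Real.dist_eq]
    exact h v hv w hw _ (fun j => (Real.dist_eq _ _).symm.trans_le (dist_le_pi_dist v w j)) i

end Coordinates

theorem stmt13_general (n : ℕ) (f : (Fin n → ℝ) → (Fin n → ℝ))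
    (hmap : ∀ v : Fin n → ℝ, (∀ i, v i ∈ Set.Icc (0:ℝ) 1) →
      ∀ i, f v i ∈ Set.Icc (0:ℝ) 1)
    (hmono : ∀ v w : Fin n → ℝ, (∀ i, v i ∈ Set.Icc (0:ℝ) 1) →
      (∀ i, w i ∈ Set.Icc (0:ℝ) 1) → v ≤ w → f v ≤ f w)
    (hlip : ∀ v w : Fin n → ℝ, (∀ i, v i ∈ Set.Icc (0:ℝ) 1) →
      (∀ i, w i ∈ Set.Icc (0:ℝ) 1) →
      ∀ C : ℝ, (∀ i, |v i - w i| ≤ C) → ∀ i, |f v i - f w i| ≤ C)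
    (m : Fin n → ℝ) (hm : ∀ i, m i ∈ Set.Icc (0:ℝ) 1) (hfix : f m = m)
    (hleast : ∀ v : Fin n → ℝ, (∀ i, v i ∈ Set.Icc (0:ℝ) 1) → f v = v → m ≤ v)
    (hpos : ∀ i, 0 < m i) :
    ∀ ε : ℝ, 0 < ε →
      ∃ v : Fin n → ℝ,
        (∀ i, v i ∈ Set.Icc (0:ℝ) 1) ∧ v ≤ m ∧ (∀ i, |m i - v i| ≤ ε) ∧
        ∀ i, v i < f v i := by
  intro ε hε
  have hbox (v : Fin n → ℝ) : v ∈ Icc 0 1 ↔ ∀ i, v i ∈ Icc (0 : ℝ) 1 := mem_Icc_pi_iff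
  have hmaps : MapsTo f (Icc 0 1) (Icc 0 1) := fun v hv => (hbox _).2 (hmap v ((hbox v).1 hv))
  have hmonoOn : MonotoneOn f (Icc 0 1) := fun v hv w hw =>
    hmono v w ((hbox v).1 hv) ((hbox w).1 hw)
  have hcont : ContinuousOn f (Icc 0 1) := (lipschitzOnWith_one_of_forall_abs_sub_le
    fun v hv w hw => hlip v w ((hbox v).1 hv) ((hbox w).1 hw)).continuousOn
  have hlim := tendsto_pi_nhds.1 <| tendsto_shiftedLfp hmaps hmonoOn hcont ((hbox m).2 hm)
    hfix fun v hv => hleast v ((hbox v).1 hv)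
  have hev : ∀ᶠ t in 𝓝[>] (0 : ℝ), 0 < t ∧ ∀ i, max (m i - ε) 0 < shiftedLfp f t i :=
    eventually_mem_nhdsWithin.and <| eventually_all.2 fun i =>
      (hlim i).eventually (lt_mem_nhds (max_lt (sub_lt_self _ hε) (hpos i)))
  obtain ⟨t, ht, hclose⟩ := hev.exists
  have hle := shiftedLfp_le ((hbox m).2 hm) hfix (le_of_lt ht)
  refine ⟨_, (hbox _).1 (shiftedLfp_mem hmaps (le_of_lt ht)), hle, fun i => ?_,
    fun i => lt_apply_of_shiftDown_eq_self ht (shiftDown_shiftedLfp hmaps hmonoOn (le_of_lt ht))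
      ((le_max_right _ _).trans_lt (hclose i))⟩
  rw [abs_of_nonneg (sub_nonneg.2 (hle i))]
  linarith [(le_max_left _ _).trans_lt (hclose i)]

/-- for a monotone 1-Lipschitz self-map of `[0,1]^n` whose least fixed
point `m` is positive everywhere, there are valuations `v ⪯ m`, ε-close to `m`, at
which `f` strictly increases in every coordinate. -/
theorem stmt13 (n : ℕ) (hn : 1 ≤ n) (f : (Fin n → ℝ) → (Fin n → ℝ))
    (hmap : ∀ v : Fin n → ℝ, (∀ i, v i ∈ Set.Icc (0:ℝ) 1) →
      ∀ i, f v i ∈ Set.Icc (0:ℝ) 1)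
    (hmono : ∀ v w : Fin n → ℝ, (∀ i, v i ∈ Set.Icc (0:ℝ) 1) →
      (∀ i, w i ∈ Set.Icc (0:ℝ) 1) → v ≤ w → f v ≤ f w)
    (hlip : ∀ v w : Fin n → ℝ, (∀ i, v i ∈ Set.Icc (0:ℝ) 1) →
      (∀ i, w i ∈ Set.Icc (0:ℝ) 1) →
      ∀ C : ℝ, (∀ i, |v i - w i| ≤ C) → ∀ i, |f v i - f w i| ≤ C)
    (m : Fin n → ℝ) (hm : ∀ i, m i ∈ Set.Icc (0:ℝ) 1) (hfix : f m = m)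
    (hleast : ∀ v : Fin n → ℝ, (∀ i, v i ∈ Set.Icc (0:ℝ) 1) → f v = v → m ≤ v)
    (hpos : ∀ i, 0 < m i) :
    ∀ ε : ℝ, 0 < ε →
      ∃ v : Fin n → ℝ,
        (∀ i, v i ∈ Set.Icc (0:ℝ) 1) ∧ v ≤ m ∧ (∀ i, |m i - v i| ≤ ε) ∧
        ∀ i, v i < f v i :=
  stmt13_general n f hmap hmono hlip m hm hfix hleast hpos
end
end
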